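/- (Greedy with random discard is 1/2-competitive for edge weights, per realization.) Let w_e ≥ 0 be edge weights on E, and let M* be a maximum edge-weight matching of G[D1,S]. For any subset Q ⊆ M*, let val(Q) := Σ_{e∈Q} w_e + maxEWM(R, S∖V_S(Q)). Then for every realization R ⊆ D2 of second-stage demand, 2^{−|M*|}·Σ_{Q⊆M*} val(Q) ≥ (1/2)·maxEWM(D1∪R, S); i.e., discarding each edge of M* independently with probability 1/2 in the first stage and playing a maximum edge-weight matching between R and the remaining supply in the second stage obtains, in expectation, at least half the value of the optimum offline matching. -/
import Mathlib


open scoped BigOperators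

/-- `M` is a matching contained in the edge set `Ed`:
a set of pairwise vertex-disjoint edges. -/
def IsMatchingIn {D S : Type*} (Ed M : Finset (D × S)) : Prop :=
  M ⊆ Ed ∧ ∀ e ∈ M, ∀ e' ∈ M, e ≠ e' → e.1 ≠ e'.1 ∧ e.2 ≠ e'.2

/-- `M` is a matching of `Ed` using only edges between `A` and `T`. -/
def IsMatchingBtw {D S : Type*} (Ed : Finset (D × S)) (A : Finset D) (T : Finset S)
    (M : Finset (D × S)) : Prop :=
  IsMatchingIn Ed M ∧ ∀ e ∈ M, e.1 ∈ A ∧ e.2 ∈ T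

/-- The set of supply vertices covered by the edge set `M`. -/
def suppliesOf {D S : Type*} [DecidableEq S] (M : Finset (D × S)) : Finset S :=
  M.image Prod.snd

/-- `maxEWM w Ed A T`: the maximum, over matchings using only edges between `A` and `T`,
of the total weight of the edges of the matching. -/
noncomputable def maxEWM {D S : Type*} (w : D × S → ℝ) (Ed : Finset (D × S))
    (A : Finset D) (T : Finset S) : ℝ :=
  sSup ((fun M => ∑ e ∈ M, w e) '' {M | IsMatchingBtw Ed A T M})

lemma maxEWM_finite_set {D S : Type*} (w : D × S → ℝ) (Ed : Finset (D × S))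
    (A : Finset D) (T : Finset S) :
    ((fun M => ∑ e ∈ M, w e) '' {M | IsMatchingBtw Ed A T M}).Finite := by
  apply Set.Finite.image
  apply Set.Finite.subset (Ed.powerset.finite_toSet)
  intro M hM
  simpa [Finset.mem_powerset] using hM.1.1

lemma empty_isMatchingBtw {D S : Type*} (Ed : Finset (D × S)) (A : Finset D) (T : Finset S) :
    IsMatchingBtw Ed A T (∅ : Finset (D × S)) :=
  ⟨⟨Finset.empty_subset _, by simp⟩, by simp⟩

lemma le_maxEWM {D S : Type*} (w : D × S → ℝ) (Ed : Finset (D × S))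
    (A : Finset D) (T : Finset S) {M : Finset (D × S)} (hM : IsMatchingBtw Ed A T M) :
    ∑ e ∈ M, w e ≤ maxEWM w Ed A T :=
  le_csSup (maxEWM_finite_set w Ed A T).bddAbove ⟨M, hM, rfl⟩

lemma exists_maxEWM {D S : Type*} (w : D × S → ℝ) (Ed : Finset (D × S))
    (A : Finset D) (T : Finset S) :
    ∃ N, IsMatchingBtw Ed A T N ∧ maxEWM w Ed A T = ∑ e ∈ N, w e := by
  have hne : ((fun M => ∑ e ∈ M, w e) '' {M | IsMatchingBtw Ed A T M}).Nonempty :=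
    ⟨_, ⟨∅, empty_isMatchingBtw Ed A T, rfl⟩⟩
  obtain ⟨N, hN, hEq⟩ := hne.csSup_mem (maxEWM_finite_set w Ed A T)
  exact ⟨N, hN, hEq.symm⟩

/-- **Greedy with random discard is 1/2-competitive for edge weights (per realization).**
Let `M*` be a maximum edge-weight matching of `G[D1,S]` and, for `Q ⊆ M*`,
`val(Q) := Σ_{e∈Q} w_e + maxEWM(R, S∖V_S(Q))`.  Then for every realization `R ⊆ D2`,
`2^{−|M*|}·Σ_{Q⊆M*} val(Q) ≥ (1/2)·maxEWM(D1∪R, S)`. -/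
theorem greedy_random_discard_half_competitive
    {D S : Type*} [DecidableEq D] [DecidableEq S]
    (D1 D2 : Finset D) (Ssup : Finset S) (Ed : Finset (D × S)) (w : D × S → ℝ)
    (hdisj : Disjoint D1 D2)
    (hE : ∀ e ∈ Ed, e.1 ∈ D1 ∪ D2 ∧ e.2 ∈ Ssup)
    (hw : ∀ e ∈ Ed, 0 ≤ w e)
    (Mstar : Finset (D × S))
    (hMstar : IsMatchingBtw Ed D1 Ssup Mstar)
    (hMstar_max : ∀ M, IsMatchingBtw Ed D1 Ssup M → ∑ e ∈ M, w e ≤ ∑ e ∈ Mstar, w e)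
    (R : Finset D) (hR : R ⊆ D2) :
    ((1 : ℝ) / 2) ^ Mstar.card *
        ∑ Q ∈ Mstar.powerset,
          ((∑ e ∈ Q, w e) + maxEWM w Ed R (Ssup \ suppliesOf Q)) ≥
      1 / 2 * maxEWM w Ed (D1 ∪ R) Ssup := by
  classical
  set n := Mstar.card with hn
  obtain ⟨N, hN, hNval⟩ := exists_maxEWM w Ed (D1 ∪ R) Ssup
  set N2 := N.filter (fun e => ¬ e.1 ∈ D1) with hN2def
  have hNEd : N ⊆ Ed := hN.1.1
  have hwN : ∀ e ∈ N, 0 ≤ w e := fun e he => hw e (hNEd he)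
  -- first-stage part of N is dominated by Mstar
  have hN1le : ∑ e ∈ N.filter (fun e => e.1 ∈ D1), w e ≤ ∑ e ∈ Mstar, w e := by
    apply hMstar_max
    refine ⟨⟨(Finset.filter_subset _ _).trans hNEd, ?_⟩, ?_⟩
    · intro e he e' he' hne
      exact hN.1.2 e (Finset.mem_of_mem_filter e he) e' (Finset.mem_of_mem_filter e' he') hne
    · intro e he
      obtain ⟨heN, heD1⟩ := Finset.mem_filter.mp he
      exact ⟨heD1, (hN.2 e heN).2⟩
  -- second-stage surviving part of N is feasible for the second stage
  have hsub : ∀ P : Finset (D × S), P ⊆ Mstar →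
      ∑ e ∈ N2.filter (fun e => ¬ e.2 ∈ suppliesOf P), w e
        ≤ maxEWM w Ed R (Ssup \ suppliesOf P) := by
    intro P hP
    apply le_maxEWM
    refine ⟨⟨?_, ?_⟩, ?_⟩
    · exact (Finset.filter_subset _ _).trans ((Finset.filter_subset _ _).trans hNEd)
    · intro e he e' he' hne
      exact hN.1.2 e (Finset.mem_of_mem_filter e (Finset.mem_of_mem_filter e he))
        e' (Finset.mem_of_mem_filter e' (Finset.mem_of_mem_filter e' he')) hne
    · intro e he
      obtain ⟨heN2, heP⟩ := Finset.mem_filter.mp he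
      obtain ⟨heN, heD1⟩ := Finset.mem_filter.mp heN2
      have h1 : e.1 ∈ D1 ∪ R := (hN.2 e heN).1
      refine ⟨?_, Finset.mem_sdiff.mpr ⟨(hN.2 e heN).2, heP⟩⟩
      rcases Finset.mem_union.mp h1 with h | h
      · exact absurd h heD1
      · exact h
  -- per-Q pairing inequality
  have key : ∀ Q ∈ Mstar.powerset,
      ((∑ e ∈ Q, w e) + maxEWM w Ed R (Ssup \ suppliesOf Q))
      + ((∑ e ∈ Mstar \ Q, w e) + maxEWM w Ed R (Ssup \ suppliesOf (Mstar \ Q)))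
      ≥ maxEWM w Ed (D1 ∪ R) Ssup := by
    intro Q hQ
    rw [Finset.mem_powerset] at hQ
    -- every edge of N2 survives in Q-side or in complement-side
    have hcov : N2.filter (fun e => e.2 ∈ suppliesOf Q)
        ⊆ N2.filter (fun e => ¬ e.2 ∈ suppliesOf (Mstar \ Q)) := by
      intro e he
      obtain ⟨heN2, heQ⟩ := Finset.mem_filter.mp he
      refine Finset.mem_filter.mpr ⟨heN2, ?_⟩
      intro heC
      obtain ⟨f, hf, hf2⟩ := Finset.mem_image.mp heQ
      obtain ⟨g, hg, hg2⟩ := Finset.mem_image.mp heC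
      obtain ⟨hgM, hgQ⟩ := Finset.mem_sdiff.mp hg
      have hfg : f ≠ g := fun h => hgQ (h ▸ hf)
      exact (hMstar.1.2 f (hQ hf) g hgM hfg).2 (hf2.trans hg2.symm)
    have hN2split : ∑ e ∈ N2, w e
        = ∑ e ∈ N2.filter (fun e => ¬ e.2 ∈ suppliesOf Q), w e
          + ∑ e ∈ N2.filter (fun e => e.2 ∈ suppliesOf Q), w e := by
      rw [add_comm]
      exact (Finset.sum_filter_add_sum_filter_not N2 _ w).symm
    have hmono : ∑ e ∈ N2.filter (fun e => e.2 ∈ suppliesOf Q), w e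
        ≤ ∑ e ∈ N2.filter (fun e => ¬ e.2 ∈ suppliesOf (Mstar \ Q)), w e := by
      apply Finset.sum_le_sum_of_subset_of_nonneg hcov
      intro e he _
      exact hwN e (Finset.mem_of_mem_filter e (Finset.mem_of_mem_filter e he))
    have hMsum : ∑ e ∈ Q, w e + ∑ e ∈ Mstar \ Q, w e = ∑ e ∈ Mstar, w e := by
      rw [add_comm]; exact Finset.sum_sdiff hQ
    have h1 := hsub Q hQ
    have h2 := hsub (Mstar \ Q) (Finset.sdiff_subset)
    have hNsplit : ∑ e ∈ N.filter (fun e => e.1 ∈ D1), w e + ∑ e ∈ N2, w e = ∑ e ∈ N, w e :=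
      Finset.sum_filter_add_sum_filter_not N _ w
    rw [hNval]
    linarith
  -- sum over the powerset, pairing Q with Mstar \ Q
  set val : Finset (D × S) → ℝ :=
    fun Q => (∑ e ∈ Q, w e) + maxEWM w Ed R (Ssup \ suppliesOf Q) with hval
  have hflip : ∑ Q ∈ Mstar.powerset, val (Mstar \ Q) = ∑ Q ∈ Mstar.powerset, val Q := by
    apply Finset.sum_nbij' (fun Q => Mstar \ Q) (fun Q => Mstar \ Q)
    · intro Q hQ; exact Finset.mem_powerset.mpr Finset.sdiff_subset
    · intro Q hQ; exact Finset.mem_powerset.mpr Finset.sdiff_subset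
    · intro Q hQ; exact Finset.sdiff_sdiff_eq_self (Finset.mem_powerset.mp hQ)
    · intro Q hQ; exact Finset.sdiff_sdiff_eq_self (Finset.mem_powerset.mp hQ)
    · intro Q hQ; rfl
  have hsum : 2 * ∑ Q ∈ Mstar.powerset, val Q
      ≥ (2 : ℝ) ^ n * maxEWM w Ed (D1 ∪ R) Ssup := by
    have : ∑ Q ∈ Mstar.powerset, (val Q + val (Mstar \ Q))
        ≥ ∑ Q ∈ Mstar.powerset, maxEWM w Ed (D1 ∪ R) Ssup :=
      Finset.sum_le_sum key
    rw [Finset.sum_add_distrib, hflip, Finset.sum_const, Finset.card_powerset] at this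
    rw [two_mul]
    calc (2:ℝ) ^ n * maxEWM w Ed (D1 ∪ R) Ssup
        = (2 ^ n : ℕ) • maxEWM w Ed (D1 ∪ R) Ssup := by
          rw [nsmul_eq_mul]; push_cast; ring
      _ ≤ _ := this
  have h2n : (0:ℝ) < 2 ^ n := by positivity
  have hpow : ((1:ℝ)/2) ^ n * 2 ^ n = 1 := by
    rw [one_div, inv_pow, inv_mul_cancel₀ (ne_of_gt h2n)]
  have hnn : (0:ℝ) ≤ ((1:ℝ)/2) ^ n := by positivity
  have := mul_le_mul_of_nonneg_left
    (by linarith : (2:ℝ) ^ n * maxEWM w Ed (D1 ∪ R) Ssup / 2 ≤ ∑ Q ∈ Mstar.powerset, val Q)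
    hnn
  calc ((1:ℝ)/2) ^ Mstar.card * ∑ Q ∈ Mstar.powerset,
        ((∑ e ∈ Q, w e) + maxEWM w Ed R (Ssup \ suppliesOf Q))
      = ((1:ℝ)/2) ^ n * ∑ Q ∈ Mstar.powerset, val Q := by rw [hn]
    _ ≥ ((1:ℝ)/2) ^ n * ((2:ℝ) ^ n * maxEWM w Ed (D1 ∪ R) Ssup / 2) := this
    _ = 1 / 2 * maxEWM w Ed (D1 ∪ R) Ssup := by
        rw [mul_div_assoc, ← mul_assoc, hpow]; ring
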